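/- arXiv:2111.07651 — 6 statements merged into one kernel-verified Lean document; each statement's English description precedes it below -/
import Mathlib

section
/- Let N be a finite-dimensional nilpotent Lie algebra over a field of characteristic zero, and let d be a derivation of N with Jordan decomposition d = d₀ + d₁ where d₀ is semisimple and d₁ is nilpotent with [d₀, d₁] = 0. Then d₀ is also a derivation of N. -/
/-!
An endomorphism `D` of a Lie algebra `L` is a derivation iff `ad : L → End L` intertwines `D` with
the commutator `[D, -]` on `End L`, i.e. iff `ad` lies in the kernel of the Sylvester operator
`β ↦ [D, -] ∘ β - β ∘ D` on `Hom(L, End L)`. The Sylvester operator is linear in `D` and carries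
commuting semisimple (resp. nilpotent) pairs to semisimple (resp. nilpotent) operators, so it maps
the Jordan–Chevalley decomposition `d = d₀ + d₁` to a Jordan–Chevalley decomposition. The kernel of
a sum `s + n` of commuting semisimple and nilpotent operators lies in the kernel of `s`; hence `ad`
is also killed by the Sylvester operator of `d₀`.
-/

open Polynomial

namespace Module.End

section CommRing

variable {R M W : Type*} [CommRing R] [AddCommGroup M] [Module R M] [AddCommGroup W] [Module R W]

lemma apply_eq_zero_of_add_apply_eq_zero {s n : End R W} (hs : s.IsSemisimple)
    (hn : IsNilpotent n) (hsn : Commute s n) {w : W} (h : (s + n) w = 0) : s w = 0 := by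
  have hw : w ∈ (s + n).genEigenspace 0 1 := by
    simpa [mem_genEigenspace_one] using h
  simpa using apply_eq_of_mem_of_comm_of_isFinitelySemisimple_of_isNil hw
    ((Commute.refl s).add_left hsn.symm) hs.isFinitelySemisimple (by simpa using hn)

/- Only compatibility with powers of `f` is assumed, rather than multiplicativity, so that these
lemmas also apply to precomposition, which reverses products. -/

lemma isNilpotent_map_of_map_pow {φ : End R M →ₗ[R] End R W} {f : End R M}
    (hφ : ∀ n, φ (f ^ n) = φ f ^ n) (hf : IsNilpotent f) : IsNilpotent (φ f) := by
  obtain ⟨n, hn⟩ := hf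
  exact ⟨n, by rw [← hφ, hn, map_zero]⟩

lemma aeval_map_of_map_pow {φ : End R M →ₗ[R] End R W} {f : End R M}
    (hφ : ∀ n, φ (f ^ n) = φ f ^ n) (p : R[X]) : aeval (φ f) p = φ (aeval f p) := by
  simp only [aeval_eq_sum_range, map_sum, map_smul, hφ]

end CommRing

lemma IsSemisimple.map_of_map_pow {K V W : Type*} [Field K] [PerfectField K] [AddCommGroup V]
    [Module K V] [FiniteDimensional K V] [AddCommGroup W] [Module K W]
    {φ : End K V →ₗ[K] End K W} {f : End K V} (hφ : ∀ n, φ (f ^ n) = φ f ^ n)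
    (hf : f.IsSemisimple) : (φ f).IsSemisimple :=
  isSemisimple_of_squarefree_aeval_eq_zero hf.minpoly_squarefree <| by
    rw [aeval_map_of_map_pow hφ, minpoly.aeval, map_zero]

end Module.End

namespace LinearMap

open Module Module.End

section CommRing

variable {R M P : Type*} [CommRing R] [AddCommGroup M] [Module R M] [AddCommGroup P] [Module R P]

variable (R M P) in
def postcompₗ : End R P →ₗ[R] End R (M →ₗ[R] P) := llcomp R M P P

variable (R M P) in
def precompₗ : End R M →ₗ[R] End R (M →ₗ[R] P) := (llcomp R M M P).flip

lemma postcompₗ_mul (g g' : End R P) :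
    postcompₗ R M P (g * g') = postcompₗ R M P g * postcompₗ R M P g' := rfl

lemma precompₗ_mul (f f' : End R M) :
    precompₗ R M P (f * f') = precompₗ R M P f' * precompₗ R M P f := rfl

lemma postcompₗ_pow (g : End R P) (n : ℕ) :
    postcompₗ R M P (g ^ n) = postcompₗ R M P g ^ n := by
  induction n with
  | zero => rfl
  | succ n ih => rw [pow_succ, pow_succ, postcompₗ_mul, ih]

lemma precompₗ_pow (f : End R M) (n : ℕ) : precompₗ R M P (f ^ n) = precompₗ R M P f ^ n := by
  induction n with
  | zero => rfl
  | succ n ih => rw [pow_succ, pow_succ', precompₗ_mul, ih]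

lemma commute_postcompₗ_precompₗ (g : End R P) (f : End R M) :
    Commute (postcompₗ R M P g) (precompₗ R M P f) := by
  ext; rfl

def sylvester (g : End R P) (f : End R M) : End R (M →ₗ[R] P) :=
  postcompₗ R M P g - precompₗ R M P f

lemma sylvester_apply (g : End R P) (f : End R M) (β : M →ₗ[R] P) :
    sylvester g f β = g ∘ₗ β - β ∘ₗ f := rfl

lemma sylvester_add (g₀ g₁ : End R P) (f₀ f₁ : End R M) :
    sylvester (g₀ + g₁) (f₀ + f₁) = sylvester g₀ f₀ + sylvester g₁ f₁ := by
  simp only [sylvester, map_add]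
  abel

lemma commute_sylvester {g₀ g₁ : End R P} {f₀ f₁ : End R M} (hg : Commute g₀ g₁)
    (hf : Commute f₀ f₁) : Commute (sylvester g₀ f₀) (sylvester g₁ f₁) := by
  have hpost : Commute (postcompₗ R M P g₀) (postcompₗ R M P g₁) := by
    rw [Commute, SemiconjBy, ← postcompₗ_mul, ← postcompₗ_mul, hg.eq]
  have hpre : Commute (precompₗ R M P f₀) (precompₗ R M P f₁) := by
    rw [Commute, SemiconjBy, ← precompₗ_mul, ← precompₗ_mul, hf.eq]
  exact (hpost.sub_right (commute_postcompₗ_precompₗ g₀ f₁)).sub_left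
    ((commute_postcompₗ_precompₗ g₁ f₀).symm.sub_right hpre)

lemma isNilpotent_sylvester {g : End R P} {f : End R M} (hg : IsNilpotent g)
    (hf : IsNilpotent f) : IsNilpotent (sylvester g f) :=
  (commute_postcompₗ_precompₗ g f).isNilpotent_sub
    (isNilpotent_map_of_map_pow (postcompₗ_pow g) hg)
    (isNilpotent_map_of_map_pow (precompₗ_pow f) hf)

end CommRing

section Field

variable {K M P : Type*} [Field K] [PerfectField K] [AddCommGroup M] [Module K M]
  [AddCommGroup P] [Module K P] [FiniteDimensional K M] [FiniteDimensional K P]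

lemma isSemisimple_sylvester {g : End K P} {f : End K M} (hg : g.IsSemisimple)
    (hf : f.IsSemisimple) : (sylvester g f).IsSemisimple :=
  (hg.map_of_map_pow (postcompₗ_pow g)).sub_of_commute (commute_postcompₗ_precompₗ g f)
    (hf.map_of_map_pow (precompₗ_pow f))

theorem comp_eq_comp_of_jordanChevalley {β : M →ₗ[K] P} {f₀ f₁ : End K M} {g₀ g₁ : End K P}
    (hf₀ : f₀.IsSemisimple) (hf₁ : IsNilpotent f₁) (hf : Commute f₀ f₁)
    (hg₀ : g₀.IsSemisimple) (hg₁ : IsNilpotent g₁) (hg : Commute g₀ g₁)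
    (hβ : (g₀ + g₁) ∘ₗ β = β ∘ₗ (f₀ + f₁)) : g₀ ∘ₗ β = β ∘ₗ f₀ := by
  rw [← sub_eq_zero, ← sylvester_apply, sylvester_add] at hβ
  rw [← sub_eq_zero, ← sylvester_apply]
  exact apply_eq_zero_of_add_apply_eq_zero (isSemisimple_sylvester hg₀ hf₀)
    (isNilpotent_sylvester hg₁ hf₁) (commute_sylvester hg hf) hβ

end Field

end LinearMap

open LinearMap in
/-- `sylvester D D` is the commutator with `D` on `End K L`, so the left side says
`[D, ad x] = ad (D x)` for all `x`. -/
lemma sylvester_comp_ad_eq_ad_comp_iff {K L : Type*} [CommRing K] [LieRing L] [LieAlgebra K L]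
    (D : Module.End K L) :
    sylvester D D ∘ₗ (LieAlgebra.ad K L : L →ₗ[K] Module.End K L) =
        (LieAlgebra.ad K L : L →ₗ[K] Module.End K L) ∘ₗ D ↔
      ∀ x y : L, D ⁅x, y⁆ = ⁅D x, y⁆ + ⁅x, D y⁆ := by
  simp only [LinearMap.ext_iff, coe_comp, LieHom.coe_toLinearMap, Function.comp_apply,
    sylvester_apply, LinearMap.sub_apply, LieAlgebra.ad_apply]
  simp only [sub_eq_iff_eq_add]

open LinearMap in
theorem semisimple_part_of_derivation_is_derivation_general
    (K : Type*) [Field K] [CharZero K]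
    (N : Type*) [LieRing N] [LieAlgebra K N] [FiniteDimensional K N]
    (d : LieDerivation K N N) (d₀ d₁ : Module.End K N)
    (hd : (d : N →ₗ[K] N) = d₀ + d₁)
    (hss : d₀.IsSemisimple) (hnil : IsNilpotent d₁)
    (hcomm : Commute d₀ d₁) :
    ∀ x y : N, d₀ ⁅x, y⁆ = ⁅d₀ x, y⁆ + ⁅x, d₀ y⁆ := by
  have hd_der : ∀ x y : N, (d₀ + d₁) ⁅x, y⁆ = ⁅(d₀ + d₁) x, y⁆ + ⁅x, (d₀ + d₁) y⁆ := by
    intro x y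
    rw [← hd]
    exact (d.apply_lie_eq_add x y).trans (add_comm _ _)
  rw [← sylvester_comp_ad_eq_ad_comp_iff] at hd_der ⊢
  rw [sylvester_add] at hd_der
  exact comp_eq_comp_of_jordanChevalley hss hnil hcomm (isSemisimple_sylvester hss hss)
    (isNilpotent_sylvester hnil hnil) (commute_sylvester hcomm hcomm) hd_der

/-- If a derivation `d` of a finite-dimensional nilpotent Lie algebra `N` over a field of
characteristic zero decomposes as `d = d₀ + d₁` with `d₀` a semisimple endomorphism,
`d₁` a nilpotent endomorphism and `[d₀, d₁] = 0`, then `d₀` is again a derivation of `N`. -/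
theorem semisimple_part_of_derivation_is_derivation
    (K : Type*) [Field K] [CharZero K]
    (N : Type*) [LieRing N] [LieAlgebra K N] [FiniteDimensional K N]
    [LieRing.IsNilpotent N]
    (d : LieDerivation K N N) (d₀ d₁ : Module.End K N)
    (hd : (d : N →ₗ[K] N) = d₀ + d₁)
    (hss : d₀.IsSemisimple) (hnil : IsNilpotent d₁)
    (hcomm : Commute d₀ d₁) :
    ∀ x y : N, d₀ ⁅x, y⁆ = ⁅d₀ x, y⁆ + ⁅x, d₀ y⁆ :=
  semisimple_part_of_derivation_is_derivation_general K N d d₀ d₁ hd hss hnil hcomm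
end

section
/- Let L be a solvable Lie algebra over ℂ containing linearly independent elements u, y₁,…,y_η, f₁,…,f_τ satisfying: [u, yⱼ] = Σₜ β_{j,t} fₜ for all j; [fₜ, yⱼ] = μ_{t,j} fₜ for all t, j; and [u, [yᵢ, yⱼ]] = 0 for all i, j. Assume that for each t there exists i with μ_{t,i} ≠ 0, and for each t there exist i ≠ j with μ_{t,i} ≠ μ_{t,j}. Then after replacing u by u' = u − Σ_{t : μ_{t,1}≠0} (β_{1,t}/μ_{t,1}) fₜ (and iterating analogous changes), the element u can be chosen so that [u, yⱼ] = 0 for all 1 ≤ j ≤ η. Precisely: there exists an element u'' of the form u + (linear combination of f₁,…,f_τ) such that [u'', yⱼ] = 0 for all j. -/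
/-!
By the Leibniz rule, `⁅u, ⁅yᵢ, yⱼ⁆⁆ = Σₜ (β i t * μ t j - β j t * μ t i) • fₜ`, so its vanishing
and the independence of the `fₜ` give `β i t * μ t j = β j t * μ t i`: for each `t` the vector
`β · t` is proportional to `μ t ·`. Choosing `i` with `μ t i ≠ 0`, the factor is
`β i t / μ t i`, and subtracting that multiple of `fₜ` from `u` kills every `⁅u, yⱼ⁆`.
-/

section WeightVectors

variable {R L ι κ : Type*} [CommRing R] [LieRing L] [LieAlgebra R L] [Fintype κ]
  {u : L} {y : ι → L} {f : κ → L} {β : ι → κ → R} {μ : κ → ι → R}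

theorem lie_lie_eq_sum_smul (huy : ∀ j, ⁅u, y j⁆ = ∑ t, β j t • f t)
    (hfy : ∀ t j, ⁅f t, y j⁆ = μ t j • f t) (i j : ι) :
    ⁅u, ⁅y i, y j⁆⁆ = ∑ t, (β i t * μ t j - β j t * μ t i) • f t := by
  have h₁ : ⁅⁅u, y i⁆, y j⁆ = ∑ t, (β i t * μ t j) • f t := by
    simp only [huy, sum_lie, smul_lie, hfy, smul_smul]
  have h₂ : ⁅⁅u, y j⁆, y i⁆ = ∑ t, (β j t * μ t i) • f t := by
    simp only [huy, sum_lie, smul_lie, hfy, smul_smul]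
  rw [leibniz_lie, ← lie_skew (y i), h₁, h₂, ← sub_eq_add_neg, ← Finset.sum_sub_distrib]
  simp only [sub_smul]

theorem mul_comm_weights_of_lie_lie_eq_zero (hf : LinearIndependent R f)
    (huy : ∀ j, ⁅u, y j⁆ = ∑ t, β j t • f t) (hfy : ∀ t j, ⁅f t, y j⁆ = μ t j • f t)
    (huyy : ∀ i j, ⁅u, ⁅y i, y j⁆⁆ = 0) (i j : ι) (t : κ) :
    β i t * μ t j = β j t * μ t i := by
  have h := huyy i j
  rw [lie_lie_eq_sum_smul huy hfy] at h
  exact sub_eq_zero.mp (Fintype.linearIndependent_iff.mp hf _ h t)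

theorem add_sum_smul_lie (hfy : ∀ t j, ⁅f t, y j⁆ = μ t j • f t) (c : κ → R) (j : ι) :
    ⁅u + ∑ t, c t • f t, y j⁆ = ⁅u, y j⁆ + ∑ t, (c t * μ t j) • f t := by
  simp only [add_lie, sum_lie, smul_lie, hfy, smul_smul]

end WeightVectors

theorem add_neg_div_mul_eq_zero {K : Type*} [Field K] {a b m n : K}
    (h : a * n = b * m) (hm : m ≠ 0) : b + -a / m * n = 0 := by
  rw [neg_div, neg_mul, div_mul_eq_mul_div, h, mul_div_cancel_right₀ b hm, add_neg_cancel]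

theorem correction_of_u_commutes_general
    (L : Type*) [LieRing L] [LieAlgebra ℂ L]
    (η τ : ℕ) (u : L) (y : Fin η → L) (f : Fin τ → L)
    (hli : LinearIndependent ℂ (Sum.elim (fun _ : Unit => u) (Sum.elim y f)))
    (β : Fin η → Fin τ → ℂ) (μ : Fin τ → Fin η → ℂ)
    (huy : ∀ j, ⁅u, y j⁆ = ∑ t, β j t • f t)
    (hfy : ∀ t j, ⁅f t, y j⁆ = μ t j • f t)
    (huyy : ∀ i j, ⁅u, ⁅y i, y j⁆⁆ = 0)
    (hμ1 : ∀ t, ∃ i, μ t i ≠ 0) :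
    ∃ c : Fin τ → ℂ, ∀ j, ⁅u + ∑ t, c t • f t, y j⁆ = 0 := by
  have hf : LinearIndependent ℂ f :=
    hli.comp (Sum.inr ∘ Sum.inr) (Sum.inr_injective.comp Sum.inr_injective)
  have hsymm := mul_comm_weights_of_lie_lie_eq_zero hf huy hfy huyy
  choose i₀ hi₀ using hμ1
  refine ⟨fun t => -β (i₀ t) t / μ t (i₀ t), fun j => ?_⟩
  rw [add_sum_smul_lie hfy, huy, ← Finset.sum_add_distrib]
  refine Finset.sum_eq_zero fun t _ => ?_
  rw [← add_smul, add_neg_div_mul_eq_zero (hsymm (i₀ t) j t) (hi₀ t), zero_smul]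

/-- Lemma 5 of the paper: given linearly independent elements `u, y₁, …, y_η, f₁, …, f_τ`
of a complex solvable Lie algebra with `⁅u, yⱼ⁆ = Σₜ β j t • fₜ`, `⁅fₜ, yⱼ⁆ = μ t j • fₜ`,
`⁅u, ⁅yᵢ, yⱼ⁆⁆ = 0`, and such that every row `μ t ·` is nonzero and non-constant, the element
`u` can be corrected by a linear combination of the `fₜ` so that it commutes with all `yⱼ`. -/
theorem correction_of_u_commutes
    (L : Type*) [LieRing L] [LieAlgebra ℂ L] [FiniteDimensional ℂ L]
    [LieAlgebra.IsSolvable L]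
    (η τ : ℕ) (u : L) (y : Fin η → L) (f : Fin τ → L)
    (hli : LinearIndependent ℂ (Sum.elim (fun _ : Unit => u) (Sum.elim y f)))
    (β : Fin η → Fin τ → ℂ) (μ : Fin τ → Fin η → ℂ)
    (huy : ∀ j, ⁅u, y j⁆ = ∑ t, β j t • f t)
    (hfy : ∀ t j, ⁅f t, y j⁆ = μ t j • f t)
    (huyy : ∀ i j, ⁅u, ⁅y i, y j⁆⁆ = 0)
    (hμ1 : ∀ t, ∃ i, μ t i ≠ 0)
    (hμ2 : ∀ t, ∃ i j, i ≠ j ∧ μ t i ≠ μ t j) :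
    ∃ c : Fin τ → ℂ, ∀ j, ⁅u + ∑ t, c t • f t, y j⁆ = 0 :=
  correction_of_u_commutes_general L η τ u y f hli β μ huy hfy huyy hμ1
end

section
/- The 5-dimensional complex Lie algebra with basis e₁,e₂,e₃,x₁,x₂ and nonzero brackets [e₂,e₃] = e₁, [e₂,x₁] = e₂, [e₁,x₁] = e₁, [e₃,x₂] = e₃, [e₁,x₂] = e₁ is a well-defined Lie algebra (the bracket is alternating and satisfies the Jacobi identity), it is solvable, and its center is zero. -/
/-!
`e₁, e₂, e₃` span a Heisenberg algebra with centre `ℂ e₁`, and `x₁, x₂` act on it by commuting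
diagonal derivations. Brackets land in the Heisenberg part, brackets of that land in `ℂ e₁`, and
`ℂ e₁` is abelian, so the algebra is solvable. For the centre: `x₁ + x₂` acts on `e₁, e₂, e₃`
with the nonzero eigenvalues `-2, -1, -1`, so a central element has no Heisenberg component, and
bracketing with `e₂ + e₃` then detects its `x₁`- and `x₂`-components.
-/

open LieAlgebra

theorem LieAlgebra.isSolvable_of_lie_mem_succ {K L : Type*} [CommRing K] [LieRing L]
    [LieAlgebra K L] (V : ℕ → Submodule K L) (n : ℕ) (h_top : V 0 = ⊤) (h_bot : V n = ⊥)
    (h_lie : ∀ k < n, ∀ x ∈ V k, ∀ y ∈ V k, ⁅x, y⁆ ∈ V (k + 1)) : IsSolvable L := by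
  have h_le : ∀ k ≤ n, (derivedSeries K L k).toSubmodule ≤ V k := by
    intro k hk
    induction k with
    | zero => simp [h_top]
    | succ k ih =>
      rw [derivedSeries_def, derivedSeriesOfIdeal_succ, ← derivedSeries_def,
        LieSubmodule.lieIdeal_oper_eq_linear_span', Submodule.span_le]
      rintro _ ⟨x, hx, y, hy, rfl⟩
      have hk' : k ≤ n := by omega
      exact h_lie k hk x (ih hk' hx) y (ih hk' hy)
  refine IsSolvable.mk (R := K) (k := n) ?_
  rw [← LieSubmodule.toSubmodule_eq_bot, ← le_bot_iff, ← h_bot]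
  exact h_le n le_rfl

-- A type synonym, so that the commutator bracket of the ring `Fin 5 → ℂ` is not in the way.
def FiveDimExt : Type := Fin 5 → ℂ

namespace FiveDimExt

instance : AddCommGroup FiveDimExt := inferInstanceAs (AddCommGroup (Fin 5 → ℂ))
instance : Module ℂ FiveDimExt := inferInstanceAs (Module ℂ (Fin 5 → ℂ))

@[simp] theorem zero_apply (i : Fin 5) : (0 : FiveDimExt) i = 0 := rfl
@[simp] theorem add_apply (u v : FiveDimExt) (i : Fin 5) : (u + v) i = u i + v i := rfl
@[simp] theorem smul_apply (c : ℂ) (u : FiveDimExt) (i : Fin 5) : (c • u) i = c * u i := rfl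

-- `u 0, …, u 4` are the coefficients of `e₁, e₂, e₃, x₁, x₂`.
def bracket (u v : FiveDimExt) : FiveDimExt :=
  ![u 1 * v 2 - u 2 * v 1 + u 0 * v 3 - u 3 * v 0 + u 0 * v 4 - u 4 * v 0,
    u 1 * v 3 - u 3 * v 1,
    u 2 * v 4 - u 4 * v 2, 0, 0]

instance : LieRing FiveDimExt where
  bracket := bracket
  add_lie x y z := by funext i; simp only [add_apply]; fin_cases i <;> simp [bracket] <;> ring
  lie_add x y z := by funext i; simp only [add_apply]; fin_cases i <;> simp [bracket] <;> ring
  lie_self x := by funext i; rw [zero_apply]; fin_cases i <;> simp [bracket] <;> ring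
  leibniz_lie x y z := by
    funext i; simp only [add_apply]; fin_cases i <;> simp [bracket] <;> ring

theorem lie_def (u v : FiveDimExt) : ⁅u, v⁆ = bracket u v := rfl

instance : LieAlgebra ℂ FiveDimExt where
  lie_smul c x y := by
    funext i; simp only [smul_apply, lie_def]; fin_cases i <;> simp [bracket] <;> ring

noncomputable def basis : Module.Basis (Fin 5) ℂ FiveDimExt := Pi.basisFun ℂ (Fin 5)

theorem basis_apply (i j : Fin 5) : basis i j = (Pi.single i 1 : Fin 5 → ℂ) j :=
  congrFun (Pi.basisFun_apply ℂ (Fin 5) i) j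

theorem finrank_eq : Module.finrank ℂ FiveDimExt = 5 := by
  simp [Module.finrank_eq_card_basis basis]

-- `basis i` lies in the `depth i`-th term of the derived series, and in no later one.
def depth : Fin 5 → ℕ := ![2, 1, 1, 0, 0]

def depthFiltration (k : ℕ) : Submodule ℂ FiveDimExt :=
  Submodule.pi {i | depth i < k} fun _ ↦ ⊥

theorem mem_depthFiltration {k : ℕ} {u : FiveDimExt} :
    u ∈ depthFiltration k ↔ ∀ i, depth i < k → u i = 0 :=
  Submodule.mem_pi.trans (by simp)

instance isSolvable : IsSolvable FiveDimExt := by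
  refine isSolvable_of_lie_mem_succ (K := ℂ) depthFiltration 3 ?_ ?_ ?_
  · ext u
    simp [mem_depthFiltration]
  · ext u
    simp only [mem_depthFiltration, Submodule.mem_bot]
    constructor
    · intro h
      funext i
      fin_cases i <;> exact h _ (by decide)
    · rintro rfl i _
      rfl
  · intro k hk x hx y hy
    simp only [mem_depthFiltration, Fin.forall_fin_succ] at hx hy ⊢
    interval_cases k <;> simp_all [depth, lie_def, bracket]

theorem center_eq_bot : center ℂ FiveDimExt = ⊥ := by
  refine eq_bot_iff.mpr fun z hz ↦ ?_
  rw [LieModule.mem_maxTrivSubmodule] at hz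
  have h_torus := congrFun (hz (basis 3 + basis 4))
  have h_heis := congrFun (hz (basis 1 + basis 2))
  simp only [lie_def, bracket, add_apply, basis_apply] at h_torus h_heis
  refine (LieSubmodule.mem_bot z).mpr (funext fun i ↦ ?_)
  fin_cases i
  · simpa [sub_eq_zero, CharZero.neg_eq_self_iff] using h_torus 0
  · simpa using h_torus 1
  · simpa using h_torus 2
  · simpa using h_heis 1
  · simpa using h_heis 2

end FiveDimExt

/-- There is a (well-defined) 5-dimensional complex Lie algebra with basis
`e₁,e₂,e₃,x₁,x₂` whose only nonzero brackets of basis vectors are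
`⁅e₂,e₃⁆ = e₁`, `⁅e₂,x₁⁆ = e₂`, `⁅e₁,x₁⁆ = e₁`, `⁅e₃,x₂⁆ = e₃`, `⁅e₁,x₂⁆ = e₁`;
it is solvable and its center is zero. (The Lie algebra structure — in particular the Jacobi
identity — is part of the existence assertion.) -/
theorem five_dim_extension_exists_solvable_center_zero :
    ∃ (R : Type) (_ : LieRing R) (_ : LieAlgebra ℂ R) (b : Module.Basis (Fin 5) ℂ R),
      Module.finrank ℂ R = 5 ∧
      ⁅b 1, b 2⁆ = b 0 ∧ ⁅b 1, b 3⁆ = b 1 ∧ ⁅b 0, b 3⁆ = b 0 ∧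
      ⁅b 2, b 4⁆ = b 2 ∧ ⁅b 0, b 4⁆ = b 0 ∧
      ⁅b 0, b 1⁆ = 0 ∧ ⁅b 0, b 2⁆ = 0 ∧ ⁅b 1, b 4⁆ = 0 ∧
      ⁅b 2, b 3⁆ = 0 ∧ ⁅b 3, b 4⁆ = 0 ∧
      LieAlgebra.IsSolvable R ∧ LieAlgebra.center ℂ R = ⊥ := by
  refine ⟨FiveDimExt, inferInstance, inferInstance, FiveDimExt.basis, FiveDimExt.finrank_eq,
    ?_, ?_, ?_, ?_, ?_, ?_, ?_, ?_, ?_, ?_, FiveDimExt.isSolvable, FiveDimExt.center_eq_bot⟩ <;>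
  funext k <;> fin_cases k <;>
  simp [FiveDimExt.lie_def, FiveDimExt.bracket, FiveDimExt.basis_apply]
end

section
/- Let L be a finite-dimensional Lie algebra over a field of characteristic 0 such that every derivation of L is inner. If the center of L is nontrivial, then L is not solvable. -/
/-!
If `L` is solvable and nonzero then `[L, L] ≠ L`, so some functional `f` kills `[L, L]` and has
`f y = 1`. Whenever `f a • ⁅b, v⁆ = f b • ⁅a, v⁆` for all `a, b` (e.g. `v` central), the map
`a ↦ f a • v` is a derivation, hence equals `ad w`, and `w` satisfies the same condition.
Starting from a nonzero central `z` this produces `x 0 = z, x 1, x 2, …` with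
`⁅x (n + 1), y⁆ = x n`; the kernels of the powers of `-ad y` then never stabilise, which is
impossible in finite dimension.
-/

namespace Module.End

variable {R M : Type*} [Semiring R] [AddCommMonoid M] [Module R M] [IsNoetherian R M]

theorem eq_zero_of_apply_succ_eq (g : Module.End R M) (x : ℕ → M) (h0 : g (x 0) = 0)
    (hsucc : ∀ n, g (x (n + 1)) = x n) : x 0 = 0 := by
  have hpow : ∀ n, (g ^ n) (x n) = x 0 := by
    intro n
    induction n with
    | zero => rfl
    | succ n ih => rw [pow_succ, Module.End.mul_apply, hsucc, ih]
  obtain ⟨n, hn⟩ := monotone_stabilizes_iff_noetherian.mpr inferInstance g.iterateKer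
  have hker : x n ∈ LinearMap.ker (g ^ (n + 1)) := by
    rw [LinearMap.mem_ker, pow_succ', Module.End.mul_apply, hpow, h0]
  have hker' : x n ∈ g.iterateKer n := by rw [hn (n + 1) n.le_succ]; exact hker
  rw [← hpow n]
  exact hker'

end Module.End

namespace LieDerivation

variable {R L M : Type*} [CommRing R] [LieRing L] [LieAlgebra R L]
  [AddCommGroup M] [Module R M] [LieRingModule L M] [LieModule R L M]

def smulRight (f : Module.Dual R L) (hf : ∀ a b : L, f ⁅a, b⁆ = 0) (m : M)
    (hm : ∀ a b : L, f a • ⁅b, m⁆ = f b • ⁅a, m⁆) : LieDerivation R L M where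
  toLinearMap := f.smulRight m
  leibniz' a b := by simp [hf, hm a b]

@[simp]
theorem smulRight_apply (f : Module.Dual R L) (hf : ∀ a b : L, f ⁅a, b⁆ = 0) (m : M)
    (hm : ∀ a b : L, f a • ⁅b, m⁆ = f b • ⁅a, m⁆) (y : L) : smulRight f hf m hm y = f y • m :=
  rfl

end LieDerivation

namespace LieAlgebra

variable {K L : Type*} [Field K] [LieRing L] [LieAlgebra K L]

theorem exists_dual_apply_eq_one_of_isSolvable [IsSolvable L] [Nontrivial L] :
    ∃ (f : Module.Dual K L) (y : L), f y = 1 ∧ ∀ a b : L, f ⁅a, b⁆ = 0 := by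
  obtain ⟨y, hy⟩ := SetLike.exists_not_mem_of_ne_top _ (derivedSeries_lt_top_of_solvable K L).ne
  obtain ⟨f, hfy, hf⟩ := Submodule.exists_dual_map_eq_bot_of_notMem hy inferInstance
  refine ⟨(f y)⁻¹ • f, y, inv_mul_cancel₀ hfy, fun a b => ?_⟩
  have hab : ⁅a, b⁆ ∈ derivedSeries K L 1 :=
    LieSubmodule.lie_mem_lie (LieSubmodule.mem_top a) (LieSubmodule.mem_top b)
  simp [(Submodule.eq_bot_iff _).mp hf _ (Submodule.mem_map_of_mem hab)]

theorem exists_lie_eq_smul_of_forall_inner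
    (hinner : ∀ D : LieDerivation K L L, ∃ x : L, D = LieDerivation.ad K L x)
    (f : Module.Dual K L) (hf : ∀ a b : L, f ⁅a, b⁆ = 0) {v : L}
    (hv : ∀ a b : L, f a • ⁅b, v⁆ = f b • ⁅a, v⁆) :
    ∃ w : L, (∀ y, ⁅w, y⁆ = f y • v) ∧ ∀ a b : L, f a • ⁅b, w⁆ = f b • ⁅a, w⁆ := by
  obtain ⟨w, hw⟩ := hinner (LieDerivation.smulRight f hf v hv)
  have hwy (y : L) : ⁅w, y⁆ = f y • v := by
    simpa using (LieDerivation.congr_fun hw y).symm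
  refine ⟨w, hwy, fun a b => ?_⟩
  rw [← lie_skew, hwy, ← lie_skew, hwy, smul_neg, smul_neg, smul_comm]

theorem exists_ladder_of_forall_inner
    (hinner : ∀ D : LieDerivation K L L, ∃ x : L, D = LieDerivation.ad K L x)
    (f : Module.Dual K L) (hf : ∀ a b : L, f ⁅a, b⁆ = 0) {z : L} (hz : z ∈ center K L) :
    ∃ x : ℕ → L, x 0 = z ∧ ∀ n y, ⁅x (n + 1), y⁆ = f y • x n := by
  choose F hF using fun (v : L) hv => exists_lie_eq_smul_of_forall_inner hinner f hf (v := v) hv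
  let s : ℕ → {v : L // ∀ a b : L, f a • ⁅b, v⁆ = f b • ⁅a, v⁆} := fun n =>
    Nat.rec ⟨z, fun a b => by simp [(LieModule.mem_maxTrivSubmodule K L L z).mp hz]⟩
      (fun _ v => ⟨F v.1 v.2, (hF v.1 v.2).2⟩) n
  exact ⟨fun n => (s n).1, rfl, fun n => (hF _ (s n).2).1⟩

end LieAlgebra

theorem not_solvable_of_all_derivations_inner_of_center_ne_bot_general
    (K : Type*) [Field K]
    (L : Type*) [LieRing L] [LieAlgebra K L] [FiniteDimensional K L]
    (hinner : ∀ D : LieDerivation K L L, ∃ x : L, D = LieDerivation.ad K L x)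
    (hcenter : LieAlgebra.center K L ≠ ⊥) :
    ¬ LieAlgebra.IsSolvable L := by
  intro hsolv
  obtain ⟨z, hz, hz0⟩ : ∃ z ∈ LieAlgebra.center K L, z ≠ 0 := by
    contrapose! hcenter
    exact (LieSubmodule.eq_bot_iff _).mpr hcenter
  have : Nontrivial L := ⟨z, 0, hz0⟩
  obtain ⟨f, y, hfy, hf⟩ := LieAlgebra.exists_dual_apply_eq_one_of_isSolvable (K := K) (L := L)
  obtain ⟨x, rfl, hx⟩ := LieAlgebra.exists_ladder_of_forall_inner hinner f hf hz
  refine hz0 (Module.End.eq_zero_of_apply_succ_eq (-LieAlgebra.ad K L y) x ?_ fun n => ?_)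
  · simp [(LieModule.mem_maxTrivSubmodule K L L _).mp hz]
  · simp [hx, hfy]

/-- If every derivation of a finite-dimensional Lie algebra `L` over a field of characteristic
zero is inner and the center of `L` is nontrivial, then `L` is not solvable. -/
theorem not_solvable_of_all_derivations_inner_of_center_ne_bot
    (K : Type*) [Field K] [CharZero K]
    (L : Type*) [LieRing L] [LieAlgebra K L] [FiniteDimensional K L]
    (hinner : ∀ D : LieDerivation K L L, ∃ x : L, D = LieDerivation.ad K L x)
    (hcenter : LieAlgebra.center K L ≠ ⊥) :
    ¬ LieAlgebra.IsSolvable L :=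
  not_solvable_of_all_derivations_inner_of_center_ne_bot_general K L hinner hcenter
end

section
/- Let R be the 5-dimensional complex Lie algebra with basis e₁,e₂,e₃,x₁,x₂ and nonzero brackets [e₂,e₃] = e₁, [e₂,x₁] = e₂, [e₁,x₁] = e₁, [e₃,x₂] = e₃, [e₁,x₂] = e₁. Then every derivation of R is inner, i.e., H¹(R, R) = 0. -/
/-!
With respect to a basis, a linear map `D` is a derivation exactly when its matrix `d` solves the
linear system obtained by writing the Leibniz rule on pairs of basis vectors in coordinates. For
the structure constants of this algebra the system leaves only the five entries `d₀₄, d₁₃, d₂₄,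
d₁₁, d₂₂` free, and `d` is then the matrix of `ad x` for
`x = d₀₄ b₀ + d₁₃ b₁ + d₂₄ b₂ - d₁₁ b₃ - d₂₂ b₄`.
-/

open Module

namespace Module.Basis

variable {K L ι : Type*} [CommRing K] [LieRing L] [LieAlgebra K L]

noncomputable def lieStructConst (b : Basis ι K L) (i j k : ι) : K := b.repr ⁅b i, b j⁆ k

variable [Fintype ι] (b : Basis ι K L)

theorem repr_lie_basis_right (u : L) (j k : ι) :
    b.repr ⁅u, b j⁆ k = ∑ m, b.repr u m * b.lieStructConst m j k := by
  nth_rw 1 [← b.sum_repr u]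
  simp only [sum_lie, smul_lie, map_sum, map_smul, Finsupp.coe_finsetSum, Finset.sum_apply,
    Finsupp.smul_apply, smul_eq_mul, lieStructConst]

theorem repr_lie_basis_left (i : ι) (v : L) (k : ι) :
    b.repr ⁅b i, v⁆ k = ∑ m, b.repr v m * b.lieStructConst i m k := by
  nth_rw 1 [← b.sum_repr v]
  simp only [lie_sum, lie_smul, map_sum, map_smul, Finsupp.coe_finsetSum, Finset.sum_apply,
    Finsupp.smul_apply, smul_eq_mul, lieStructConst]

end Module.Basis

section StructConst

variable {K ι : Type*} [CommRing K] [Fintype ι]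

/-- With `c i j k` the `k`-th coordinate of `⁅b i, b j⁆` and `d k j` the `k`-th coordinate of
`D (b j)`, this is the Leibniz rule `D ⁅b i, b j⁆ = ⁅b i, D (b j)⁆ + ⁅D (b i), b j⁆`. -/
def IsDerivationMatrix (c : ι → ι → ι → K) (d : Matrix ι ι K) : Prop :=
  ∀ i j k, ∑ m, d k m * c i j m = ∑ m, d m j * c i m k + ∑ m, d m i * c m j k

def adMatrix (c : ι → ι → ι → K) (x : ι → K) : Matrix ι ι K :=
  Matrix.of fun k j => ∑ m, x m * c m j k

end StructConst

namespace LieDerivation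

variable {K L ι : Type*} [CommRing K] [LieRing L] [LieAlgebra K L] [Fintype ι] [DecidableEq ι]
  (b : Basis ι K L)

theorem isDerivationMatrix_toMatrix (D : LieDerivation K L L) :
    IsDerivationMatrix b.lieStructConst (LinearMap.toMatrix b b D) := by
  intro i j k
  have hleibniz := congrArg (b.repr · k) (D.apply_lie_eq_add (b i) (b j))
  simp only [map_add, Finsupp.add_apply, b.repr_lie_basis_left, b.repr_lie_basis_right]
    at hleibniz
  have hD := congrFun (LinearMap.toMatrix_mulVec_repr b b (D : L →ₗ[K] L) ⁅b i, b j⁆) k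
  simp only [Matrix.mulVec, dotProduct, coeFn_coe] at hD
  simpa only [LinearMap.toMatrix_apply, coeFn_coe, Basis.lieStructConst, ← hD] using hleibniz

theorem toMatrix_ad (x : L) :
    LinearMap.toMatrix b b (ad K L x) = adMatrix b.lieStructConst (b.repr x) := by
  ext k j
  simp [LinearMap.toMatrix_apply, adMatrix, b.repr_lie_basis_right]

theorem exists_eq_ad_of_toMatrix_eq_adMatrix {D : LieDerivation K L L} {v : ι → K}
    (h : LinearMap.toMatrix b b D = adMatrix b.lieStructConst v) : ∃ x, D = ad K L x := by
  refine ⟨b.equivFun.symm v, ?_⟩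
  rw [← b.equivFun.apply_symm_apply v, Basis.equivFun_apply, ← toMatrix_ad] at h
  ext y
  simpa using LinearMap.congr_fun ((LinearMap.toMatrix b b).injective h) y

end LieDerivation

/-- Entry `(i, j)` is the coordinate vector of `⁅b i, b j⁆`. -/
def fiveDimExtStructConst (K : Type*) [CommRing K] : Fin 5 → Fin 5 → Fin 5 → K :=
  let e (i : Fin 5) : Fin 5 → K := Pi.single i 1
  ![![0, 0, 0, e 0, e 0],
    ![0, 0, e 0, e 1, 0],
    ![0, -e 0, 0, 0, e 2],
    ![-e 0, -e 1, 0, 0, 0],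
    ![-e 0, 0, -e 2, 0, 0]]

theorem lieStructConst_eq_fiveDimExtStructConst {K L : Type*} [CommRing K] [LieRing L]
    [LieAlgebra K L] (b : Basis (Fin 5) K L)
    (h12 : ⁅b 1, b 2⁆ = b 0) (h13 : ⁅b 1, b 3⁆ = b 1) (h03 : ⁅b 0, b 3⁆ = b 0)
    (h24 : ⁅b 2, b 4⁆ = b 2) (h04 : ⁅b 0, b 4⁆ = b 0)
    (h01 : ⁅b 0, b 1⁆ = 0) (h02 : ⁅b 0, b 2⁆ = 0) (h14 : ⁅b 1, b 4⁆ = 0)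
    (h23 : ⁅b 2, b 3⁆ = 0) (h34 : ⁅b 3, b 4⁆ = 0) :
    b.lieStructConst = fiveDimExtStructConst K := by
  funext i j k
  fin_cases i <;> fin_cases j <;>
    simp [Basis.lieStructConst, fiveDimExtStructConst, Finsupp.single_apply, Pi.single_apply,
      eq_comm, h12, h13, h03, h24, h04, h01, h02, h14, h23, h34,
      ← lie_skew (b 2) (b 1), ← lie_skew (b 3) (b 1), ← lie_skew (b 3) (b 0),
      ← lie_skew (b 4) (b 2), ← lie_skew (b 4) (b 0), ← lie_skew (b 1) (b 0),
      ← lie_skew (b 2) (b 0), ← lie_skew (b 4) (b 1), ← lie_skew (b 3) (b 2),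
      ← lie_skew (b 4) (b 3)]

theorem IsDerivationMatrix.eq_adMatrix_fiveDimExt {K : Type*} [CommRing K]
    {d : Matrix (Fin 5) (Fin 5) K} (hd : IsDerivationMatrix (fiveDimExtStructConst K) d) :
    d = adMatrix (fiveDimExtStructConst K) ![d 0 4, d 1 3, d 2 4, -d 1 1, -d 2 2] := by
  simp only [IsDerivationMatrix, Fin.sum_univ_five] at hd
  have h30 : d 3 0 = 0 := by simpa [fiveDimExtStructConst, eq_comm] using hd 0 1 1
  have h40 : d 4 0 = 0 := by simpa [fiveDimExtStructConst, eq_comm] using hd 0 2 2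
  have h20 : d 2 0 = 0 := by simpa [fiveDimExtStructConst, eq_comm] using hd 0 3 2
  have h10 : d 1 0 = 0 := by simpa [fiveDimExtStructConst, eq_comm] using hd 0 4 1
  have h33 : d 3 3 = 0 := by simpa [fiveDimExtStructConst, eq_comm] using hd 1 3 1
  have h43 : d 4 3 = 0 := by simpa [fiveDimExtStructConst, eq_comm] using hd 2 3 2
  have h44 : d 4 4 = 0 := by simpa [fiveDimExtStructConst, eq_comm] using hd 2 4 2
  have h34 : d 3 4 = 0 := by simpa [fiveDimExtStructConst, eq_comm] using hd 1 4 1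
  have h23 : d 2 3 = 0 := by simpa [fiveDimExtStructConst, eq_comm] using hd 1 3 0
  have h21 : d 2 1 = 0 := by simpa [fiveDimExtStructConst, eq_comm] using hd 1 3 2
  have h31 : d 3 1 = 0 := by simpa [fiveDimExtStructConst, eq_comm] using hd 1 3 3
  have h41 : d 4 1 = 0 := by simpa [fiveDimExtStructConst, eq_comm] using hd 1 3 4
  have h32 : d 3 2 = 0 := by simpa [fiveDimExtStructConst, eq_comm] using hd 2 4 3
  have h42 : d 4 2 = 0 := by simpa [fiveDimExtStructConst, eq_comm] using hd 2 4 4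
  have h12 : d 1 2 = 0 := by simpa [fiveDimExtStructConst, eq_comm] using hd 2 4 1
  have h14 : d 1 4 = 0 := by simpa [fiveDimExtStructConst, eq_comm] using hd 2 4 0
  have h00 : d 0 0 = d 1 1 + d 2 2 := by
    linear_combination (norm := simp [fiveDimExtStructConst, add_comm]) hd 1 2 0
  have h01 : d 0 1 = -d 2 4 := by
    linear_combination (norm := simp [fiveDimExtStructConst, add_comm]) -hd 1 4 0
  have h02 : d 0 2 = d 1 3 := by
    linear_combination (norm := simp [fiveDimExtStructConst, add_comm]) -hd 2 3 0
  have h03 : d 0 3 = d 0 4 := by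
    linear_combination (norm := simp [fiveDimExtStructConst, add_comm]) -hd 3 4 0
  ext k j
  fin_cases k <;> fin_cases j <;>
    simp [adMatrix, fiveDimExtStructConst, Fin.sum_univ_five, h30, h40, h20, h10, h33, h43, h44,
      h34, h23, h21, h31, h41, h32, h42, h12, h14, h00, h01, h02, h03]

theorem derivations_inner_of_five_dim_extension_general
    (R : Type*) [LieRing R] [LieAlgebra ℂ R]
    (b : Module.Basis (Fin 5) ℂ R)
    (h12 : ⁅b 1, b 2⁆ = b 0) (h13 : ⁅b 1, b 3⁆ = b 1) (h03 : ⁅b 0, b 3⁆ = b 0)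
    (h24 : ⁅b 2, b 4⁆ = b 2) (h04 : ⁅b 0, b 4⁆ = b 0)
    (h01 : ⁅b 0, b 1⁆ = 0) (h02 : ⁅b 0, b 2⁆ = 0) (h14 : ⁅b 1, b 4⁆ = 0)
    (h23 : ⁅b 2, b 3⁆ = 0) (h34 : ⁅b 3, b 4⁆ = 0) :
    ∀ D : LieDerivation ℂ R R, ∃ x : R, D = LieDerivation.ad ℂ R x := by
  intro D
  have hc := lieStructConst_eq_fiveDimExtStructConst b h12 h13 h03 h24 h04 h01 h02 h14 h23 h34
  have hD := D.isDerivationMatrix_toMatrix b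
  rw [hc] at hD
  exact LieDerivation.exists_eq_ad_of_toMatrix_eq_adMatrix b (hc ▸ hD.eq_adMatrix_fiveDimExt)

/-- Every derivation of the 5-dimensional complex solvable Lie algebra with basis
`e₁,e₂,e₃,x₁,x₂` and nonzero brackets `⁅e₂,e₃⁆ = e₁`, `⁅e₂,x₁⁆ = e₂`, `⁅e₁,x₁⁆ = e₁`,
`⁅e₃,x₂⁆ = e₃`, `⁅e₁,x₂⁆ = e₁` is inner, i.e. `H¹(R,R) = 0`. -/
theorem derivations_inner_of_five_dim_extension
    (R : Type*) [LieRing R] [LieAlgebra ℂ R] [FiniteDimensional ℂ R]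
    (b : Module.Basis (Fin 5) ℂ R)
    (h12 : ⁅b 1, b 2⁆ = b 0) (h13 : ⁅b 1, b 3⁆ = b 1) (h03 : ⁅b 0, b 3⁆ = b 0)
    (h24 : ⁅b 2, b 4⁆ = b 2) (h04 : ⁅b 0, b 4⁆ = b 0)
    (h01 : ⁅b 0, b 1⁆ = 0) (h02 : ⁅b 0, b 2⁆ = 0) (h14 : ⁅b 1, b 4⁆ = 0)
    (h23 : ⁅b 2, b 3⁆ = 0) (h34 : ⁅b 3, b 4⁆ = 0) :
    ∀ D : LieDerivation ℂ R R, ∃ x : R, D = LieDerivation.ad ℂ R x :=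
  derivations_inner_of_five_dim_extension_general R b h12 h13 h03 h24 h04 h01 h02 h14 h23 h34
end

section
/- Let R be the complex solvable Lie algebra with basis e₁,…,eₙ, f₁, f₂ and nonzero brackets [eₖ, eₙ] = e_{k−1} for 2 ≤ k ≤ n−1, [f₁, eₙ] = eₙ, [f₁, eₖ] = (n−1−k)eₖ for 1 ≤ k ≤ n−1, [f₂, eₖ] = eₖ for 1 ≤ k ≤ n−1. Then R is a Lie algebra (Jacobi identity holds), R is solvable, and the subalgebra spanned by e₁,…,eₙ is a nilpotent ideal of R. -/
/-!
Every bracket of two basis vectors lies in `E = span {e₁, …, eₙ}`, so `E` is an ideal containing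
`⁅R, R⁆`. On `E` the bracket is strictly triangular: `⁅eᵢ, eⱼ⁆` lies in the span of the `eₖ` with
`k < min i j`. Hence `ad x` for `x ∈ E` lowers the flag `span {eₖ : k < m}`, the lower central
series of `E` runs down this flag to `0`, and `E` is nilpotent. A Lie algebra whose derived
algebra lies in a nilpotent ideal is solvable.
-/

open Submodule

section

variable {K L : Type*} [CommRing K] [LieRing L] [LieAlgebra K L] {n : ℕ}

theorem lie_mem_of_mem_span_of_mem_span {s t : Set L} {T : Submodule K L}
    (h : ∀ y ∈ s, ∀ z ∈ t, ⁅y, z⁆ ∈ T) {x y : L} (hx : x ∈ span K s) (hy : y ∈ span K t) :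
    ⁅x, y⁆ ∈ T := by
  let bracket : L →ₗ[K] L →ₗ[K] L := LinearMap.mk₂ K (⁅·, ·⁆) add_lie smul_lie lie_add lie_smul
  have : map₂ bracket (span K s) (span K t) ≤ T := by
    rw [map₂_span_span, span_le]
    rintro _ ⟨y, hy, z, hz, rfl⟩
    exact h y hy z hz
  exact map₂_le.mp this x hx y hy

theorem Module.Basis.lie_mem_of_forall_lie_mem {ι : Type*} (b : Module.Basis ι K L)
    {T : Submodule K L} (h : ∀ u v, ⁅b u, b v⁆ ∈ T) (x y : L) : ⁅x, y⁆ ∈ T := by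
  refine lie_mem_of_mem_span_of_mem_span ?_ (b.mem_span x) (b.mem_span y)
  rintro _ ⟨u, rfl⟩ _ ⟨v, rfl⟩
  exact h u v

namespace LieIdeal

theorem isNilpotent_of_lcs_eq_bot {I : LieIdeal K L} {k : ℕ} (h : I.lcs L k = ⊥) :
    LieRing.IsNilpotent I := by
  have : LieModule.IsNilpotent I L := by
    refine LieModule.IsNilpotent.mk (R := K) (L := I) L (k := k) ?_
    rw [← LieSubmodule.toSubmodule_inj, ← I.coe_lcs_eq, h]; rfl
  exact Subtype.val_injective.lieModuleIsNilpotent (R := K) (L := I) (M := I) (f := LieHom.id)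
    (g := (I : Submodule K L).subtype) fun _ _ => rfl

theorem lcs_add_le_of_lie_mem {M : Type*} [AddCommGroup M] [Module K M] [LieRingModule L M]
    [LieModule K L M] (I : LieIdeal K L) {F : ℕ → Submodule K M}
    (hF : ∀ m, ∀ x ∈ I, ∀ y ∈ F (m + 1), ⁅x, y⁆ ∈ F m) {j m : ℕ}
    (h : (I.lcs M j : Submodule K M) ≤ F m) : (I.lcs M (j + m) : Submodule K M) ≤ F 0 := by
  induction m generalizing j with
  | zero => exact h
  | succ m ih =>
    rw [← add_assoc, add_right_comm]
    refine ih ?_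
    rw [lcs_succ, LieSubmodule.lieIdeal_oper_eq_linear_span', span_le]
    rintro _ ⟨x, hx, y, hy, rfl⟩
    exact hF m x hx y (h hy)

end LieIdeal

section Triangular

variable {e : Fin n → L}

theorem lie_mem_span_Iio_right (he : ∀ i j, i < j → ⁅e i, e j⁆ ∈ span K (e '' Set.Iio i))
    (i j : Fin n) : ⁅e i, e j⁆ ∈ span K (e '' Set.Iio j) := by
  rcases lt_trichotomy i j with hij | rfl | hji
  · exact span_mono (Set.image_mono (Set.Iio_subset_Iio hij.le)) (he i j hij)
  · rw [lie_self]
    exact zero_mem _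
  · rw [← lie_skew]
    exact neg_mem (he j i hji)

theorem LieIdeal.isNilpotent_of_lie_mem_span_Iio (I : LieIdeal K L)
    (hI : (I : Submodule K L) = span K (Set.range e))
    (he : ∀ i j, i < j → ⁅e i, e j⁆ ∈ span K (e '' Set.Iio i)) : LieRing.IsNilpotent I := by
  let F : ℕ → Submodule K L := fun m => span K (e '' {j | (j : ℕ) < m})
  have hF : ∀ m, ∀ x ∈ I, ∀ y ∈ F (m + 1), ⁅x, y⁆ ∈ F m := by
    intro m x hx y hy
    replace hx : x ∈ span K (Set.range e) := hI ▸ hx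
    refine lie_mem_of_mem_span_of_mem_span ?_ hx hy
    rintro _ ⟨i, rfl⟩ _ ⟨j, hj, rfl⟩
    refine span_mono (Set.image_mono fun k hk => ?_) (lie_mem_span_Iio_right he i j)
    simp only [Set.mem_Iio, Fin.lt_def, Set.mem_ofPred_eq] at hk hj ⊢
    omega
  have hlcs_one : (I.lcs L 1 : Submodule K L) ≤ F n := by
    have hle : I.lcs L 1 ≤ I := by
      rw [lcs_succ]
      exact LieSubmodule.lie_le_left I _
    refine ((LieSubmodule.toSubmodule_le_toSubmodule _ _).mpr hle).trans (hI.le.trans ?_)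
    exact span_mono (Set.range_subset_iff.mpr fun j => ⟨j, j.isLt, rfl⟩)
  have hF_zero : F 0 = ⊥ := by simp [F]
  refine isNilpotent_of_lcs_eq_bot (k := 1 + n) ?_
  rw [← LieSubmodule.toSubmodule_eq_bot, ← le_bot_iff, ← hF_zero]
  exact I.lcs_add_le_of_lie_mem hF hlcs_one

end Triangular

theorem LieAlgebra.isSolvable_of_lie_mem {I : LieIdeal K L} [LieAlgebra.IsSolvable I]
    (h : ∀ x y : L, ⁅x, y⁆ ∈ I) : LieAlgebra.IsSolvable L := by
  obtain ⟨k, hk⟩ := IsSolvable.solvable K I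
  rw [LieIdeal.derivedSeries_eq_bot_iff] at hk
  have h_one : derivedSeries K L 1 ≤ I :=
    (LieSubmodule.lie_le_iff _ _ _).mpr fun x _ y _ => h x y
  refine IsSolvable.mk (R := K) (k := k + 1) (eq_bot_iff.mpr ?_)
  calc derivedSeries K L (k + 1)
      = derivedSeriesOfIdeal K L k (derivedSeries K L 1) := derivedSeriesOfIdeal_add ⊤ k 1
    _ ≤ derivedSeriesOfIdeal K L k I := derivedSeriesOfIdeal_mono h_one k
    _ = ⊥ := hk

theorem lie_mem_span_Iio_of_lie_last_eq (hn : 0 < n) (e : Fin n → L)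
    (h1 : ∀ k : Fin n, 1 ≤ (k : ℕ) → (k : ℕ) ≤ n - 2 →
      ⁅e k, e ⟨n - 1, Nat.sub_one_lt_of_lt hn⟩⁆ = e ⟨(k : ℕ) - 1, (Nat.sub_le _ 1).trans_lt k.isLt⟩)
    (h2 : ⁅e ⟨0, hn⟩, e ⟨n - 1, Nat.sub_one_lt_of_lt hn⟩⁆ = 0)
    (h3 : ∀ i j : Fin n, (i : ℕ) < (j : ℕ) → (j : ℕ) < n - 1 → ⁅e i, e j⁆ = 0)
    (i j : Fin n) (hij : i < j) : ⁅e i, e j⁆ ∈ span K (e '' Set.Iio i) := by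
  rcases lt_or_ge (j : ℕ) (n - 1) with hj | hj
  · rw [h3 i j hij hj]
    exact zero_mem _
  obtain rfl : j = ⟨n - 1, Nat.sub_one_lt_of_lt hn⟩ :=
    Fin.ext (le_antisymm (Nat.le_sub_one_of_lt j.isLt) hj)
  rcases Nat.eq_zero_or_pos (i : ℕ) with hi | hi
  · obtain rfl : i = ⟨0, hn⟩ := Fin.ext hi
    rw [h2]
    exact zero_mem _
  · rw [h1 i hi (by rw [Fin.lt_def] at hij; omega)]
    exact subset_span ⟨_, by simp only [Set.mem_Iio, Fin.lt_def]; omega, rfl⟩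

theorem lie_mem_span_singleton_of_lie_eq_smul (hn : 0 < n) (e : Fin n → L) (f : Fin 2 → L)
    (h4 : ⁅f 0, e ⟨n - 1, Nat.sub_one_lt_of_lt hn⟩⁆ = e ⟨n - 1, Nat.sub_one_lt_of_lt hn⟩)
    (h5 : ∀ k : Fin n, (k : ℕ) ≤ n - 2 → ⁅f 0, e k⁆ = ((n : K) - 2 - (k : ℕ)) • e k)
    (h6 : ∀ k : Fin n, (k : ℕ) ≤ n - 2 → ⁅f 1, e k⁆ = e k)
    (h7 : ⁅f 1, e ⟨n - 1, Nat.sub_one_lt_of_lt hn⟩⁆ = 0) (a : Fin 2) (k : Fin n) :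
    ⁅f a, e k⁆ ∈ K ∙ e k := by
  revert a
  rw [Fin.forall_fin_two]
  rcases le_or_gt (k : ℕ) (n - 2) with hk | hk
  · rw [h5 k hk, h6 k hk]
    exact ⟨smul_mem _ _ (mem_span_singleton_self _), mem_span_singleton_self _⟩
  · obtain rfl : k = ⟨n - 1, Nat.sub_one_lt_of_lt hn⟩ :=
      Fin.ext (le_antisymm (Nat.le_sub_one_of_lt k.isLt) (by omega))
    rw [h4, h7]
    exact ⟨mem_span_singleton_self _, zero_mem _⟩

end

/-- The complex Lie algebra with basis `e₁,…,eₙ,f₁,f₂` (here `e` is indexed by `Fin n` and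
`f` by `Fin 2`) and nonzero brackets `⁅eₖ,eₙ⁆ = e_{k−1}` (`2 ≤ k ≤ n−1`), `⁅f₁,eₙ⁆ = eₙ`,
`⁅f₁,eₖ⁆ = (n−1−k)eₖ` and `⁅f₂,eₖ⁆ = eₖ` (`1 ≤ k ≤ n−1`) satisfies the Jacobi identity,
is solvable, and the span of `e₁,…,eₙ` is a nilpotent ideal. -/
theorem solvable_algebra_with_nilpotent_ideal
    (n : ℕ) (hn : 4 ≤ n)
    (R : Type*) [LieRing R] [LieAlgebra ℂ R]
    (b : Module.Basis (Fin n ⊕ Fin 2) ℂ R)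
    (h1 : ∀ k : Fin n, 1 ≤ (k : ℕ) → (k : ℕ) ≤ n - 2 →
      ⁅b (Sum.inl k), b (Sum.inl ⟨n - 1, by omega⟩)⁆ = b (Sum.inl ⟨(k : ℕ) - 1, by omega⟩))
    (h2 : ⁅b (Sum.inl ⟨0, by omega⟩), b (Sum.inl ⟨n - 1, by omega⟩)⁆ = 0)
    (h3 : ∀ i j : Fin n, (i : ℕ) < (j : ℕ) → (j : ℕ) < n - 1 →
      ⁅b (Sum.inl i), b (Sum.inl j)⁆ = 0)
    (h4 : ⁅b (Sum.inr 0), b (Sum.inl ⟨n - 1, by omega⟩)⁆ = b (Sum.inl ⟨n - 1, by omega⟩))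
    (h5 : ∀ k : Fin n, (k : ℕ) ≤ n - 2 →
      ⁅b (Sum.inr 0), b (Sum.inl k)⁆ = (((n : ℂ) - 2 - (k : ℕ))) • b (Sum.inl k))
    (h6 : ∀ k : Fin n, (k : ℕ) ≤ n - 2 → ⁅b (Sum.inr 1), b (Sum.inl k)⁆ = b (Sum.inl k))
    (h7 : ⁅b (Sum.inr 1), b (Sum.inl ⟨n - 1, by omega⟩)⁆ = 0)
    (h8 : ⁅b (Sum.inr 0), b (Sum.inr 1)⁆ = 0) :
    (∀ u v w : R, ⁅u, ⁅v, w⁆⁆ = ⁅⁅u, v⁆, w⁆ + ⁅v, ⁅u, w⁆⁆) ∧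
    LieAlgebra.IsSolvable R ∧
    ∃ I : LieIdeal ℂ R,
      (I : Submodule ℂ R) = Submodule.span ℂ (Set.range (b ∘ Sum.inl)) ∧
      LieRing.IsNilpotent I := by
  have hpos : 0 < n := by omega
  set E := span ℂ (Set.range (b ∘ Sum.inl))
  have hee := lie_mem_span_Iio_of_lie_last_eq (K := ℂ) hpos (b ∘ Sum.inl) h1 h2 h3
  have hfe (a : Fin 2) (k : Fin n) : ⁅b (Sum.inr a), b (Sum.inl k)⁆ ∈ E :=
    span_mono (Set.singleton_subset_iff.mpr (Set.mem_range_self k)) <|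
      lie_mem_span_singleton_of_lie_eq_smul hpos _ (b ∘ Sum.inr) h4 h5 h6 h7 a k
  have hbracket : ∀ x y : R, ⁅x, y⁆ ∈ E := by
    refine b.lie_mem_of_forall_lie_mem ?_
    rintro (i | a) (j | d)
    · exact span_mono (Set.image_subset_range _ _) (lie_mem_span_Iio_right hee i j)
    · rw [← lie_skew]
      exact neg_mem (hfe d i)
    · exact hfe a j
    · fin_cases a <;> fin_cases d <;> simp [h8, ← lie_skew (b (Sum.inr 1))]
  let I : LieIdeal ℂ R := { E with lie_mem := fun _ => hbracket _ _ }
  have hI : LieRing.IsNilpotent I := I.isNilpotent_of_lie_mem_span_Iio rfl hee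
  exact ⟨fun u v w => leibniz_lie u v w, LieAlgebra.isSolvable_of_lie_mem (I := I) hbracket,
    I, rfl, hI⟩
end
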